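/- Fix n : ℕ and λ ∈ [0,1]. Let count : (Fin n → Bool) → ℕ, count(y) = |{i : y i = true}|, and let RRcount_λ(x) = PMF.map count (RR_λ(x)). If two inputs x, x' : Fin n → Bool satisfy count(x) = count(x'), then RRcount_λ(x) and RRcount_λ(x') are equal as distributions: for every k : ℕ, (RRcount_λ(x))(k) = (RRcount_λ(x'))(k). In particular, for any x with count(x) = i, RRcount_λ(x) = RRcount_λ(rep_i), where rep_i j = (j < i). -/

import Mathlib

/-- `n` independent Bernoulli(`lam`) coin flips, as an `n`-fold monadic bind in the
`PMF` monad. -/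
noncomputable def coins (lam : ℝ) (h1 : lam ≤ 1) : (n : ℕ) → PMF (Fin n → Bool)
  | 0 => PMF.pure fun _ => false
  | n + 1 =>
      (PMF.bernoulli (Real.toNNReal lam) (Real.toNNReal_le_one.mpr h1)).bind fun b =>
        (coins lam h1 n).bind fun rest => PMF.pure (Fin.cons b rest)

/-- Binary randomized response with flip probability `lam`. -/
noncomputable def RR (n : ℕ) (lam : ℝ) (h1 : lam ≤ 1) (x : Fin n → Bool) :
    PMF (Fin n → Bool) :=
  (coins lam h1 n).map fun θ i => xor (x i) (θ i)

/-- The counting query: number of `true` coordinates. -/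
def count {n : ℕ} (y : Fin n → Bool) : ℕ :=
  (Finset.univ.filter fun i => y i = true).card

/-- Randomized response followed by the counting query. -/
noncomputable def RRcount (n : ℕ) (lam : ℝ) (h1 : lam ≤ 1) (x : Fin n → Bool) :
    PMF ℕ :=
  (RR n lam h1 x).map count

/-- The representative input `rep n i`: `i` ones followed by `n - i` zeros. -/
def rep (n : ℕ) (i : ℕ) : Fin n → Bool := fun j => decide ((j : ℕ) < i)

/- ### Auxiliary lemmas -/

lemma map_equiv_apply {α β : Type*} (p : PMF α) (e : α ≃ β) (b : β) :
    (p.map e) b = p (e.symm b) := by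
  rw [PMF.map_apply, tsum_eq_single (e.symm b)]
  · simp
  · intro a ha
    simp only [ite_eq_right_iff]
    intro h; subst h; simp at ha

lemma coins_apply (lam : ℝ) (h1 : lam ≤ 1) :
    ∀ (n : ℕ) (θ : Fin n → Bool),
      coins lam h1 n θ =
        ∏ i, (if θ i then ENNReal.ofReal lam else 1 - ENNReal.ofReal lam)
  | 0, θ => by
      have : θ = (fun _ => false) := funext fun i => i.elim0
      subst this
      simp [coins, PMF.pure_apply]
  | n + 1, θ => by
      rw [coins]
      rw [PMF.bind_apply]
      rw [tsum_eq_single (θ 0)]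
      · rw [PMF.bind_apply, tsum_eq_single (Fin.tail θ)]
        · rw [PMF.pure_apply, if_pos (Fin.cons_self_tail θ).symm]
          rw [coins_apply lam h1 n (Fin.tail θ)]
          rw [Fin.prod_univ_succ]
          simp [PMF.bernoulli_apply, Fin.tail, mul_one, Bool.cond_eq_if]
          split_ifs <;> simp [ENNReal.ofReal, ENNReal.coe_sub] <;> rfl
        · intro rest hrest
          rw [PMF.pure_apply, if_neg, mul_zero]
          intro h
          apply hrest
          rw [h]
          simp [Fin.tail]
      · intro b hb
        rw [PMF.bind_apply]
        convert mul_zero _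
        rw [ENNReal.tsum_eq_zero]
        intro rest
        rw [PMF.pure_apply, if_neg, mul_zero]
        intro h
        apply hb
        rw [h]
        simp

/-- Permutation of coordinates as an equiv of function spaces. -/
def permArrow {n : ℕ} (σ : Equiv.Perm (Fin n)) : (Fin n → Bool) ≃ (Fin n → Bool) where
  toFun θ := θ ∘ σ
  invFun θ := θ ∘ σ.symm
  left_inv θ := by ext i; simp
  right_inv θ := by ext i; simp

lemma coins_map_perm (n : ℕ) (lam : ℝ) (h1 : lam ≤ 1) (σ : Equiv.Perm (Fin n)) :
    (coins lam h1 n).map (permArrow σ) = coins lam h1 n := by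
  ext θ
  rw [map_equiv_apply, coins_apply, coins_apply]
  show ∏ i, (if θ (σ.symm i) then _ else _) = _
  exact Fintype.prod_equiv σ.symm _ _ (fun i => rfl)

lemma count_comp_perm {n : ℕ} (σ : Equiv.Perm (Fin n)) (y : Fin n → Bool) :
    count (y ∘ σ) = count y := by
  unfold count
  rw [Finset.card_filter, Finset.card_filter]
  exact Fintype.sum_equiv σ _ _ (fun i => rfl)

lemma RRcount_perm (n : ℕ) (lam : ℝ) (h1 : lam ≤ 1) (x : Fin n → Bool)
    (σ : Equiv.Perm (Fin n)) :
    RRcount n lam h1 (x ∘ σ) = RRcount n lam h1 x := by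
  unfold RRcount RR
  rw [PMF.map_comp, PMF.map_comp]
  conv_lhs => rw [← coins_map_perm n lam h1 σ]
  rw [PMF.map_comp]
  congr 1
  ext θ
  show count (fun i => xor ((x ∘ σ) i) (permArrow σ θ i)) = count (fun i => xor (x i) (θ i))
  rw [← count_comp_perm σ (fun i => xor (x i) (θ i))]
  rfl

lemma exists_perm {n : ℕ} (x x' : Fin n → Bool) (hc : count x = count x') :
    ∃ σ : Equiv.Perm (Fin n), x' = x ∘ σ := by
  have hcard : Fintype.card {i // x' i = true} = Fintype.card {i // x i = true} := by
    simp only [Fintype.card_subtype]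
    exact hc.symm
  have hcard' : Fintype.card {i // ¬ x' i = true} = Fintype.card {i // ¬ x i = true} := by
    rw [Fintype.card_subtype_compl, Fintype.card_subtype_compl, hcard]
  let e := Fintype.equivOfCardEq hcard
  let f := Fintype.equivOfCardEq hcard'
  refine ⟨Equiv.subtypeCongr e f, funext fun i => ?_⟩
  by_cases h : x' i = true
  · have : x ((Equiv.subtypeCongr e f) i) = true := by
      simp only [Equiv.subtypeCongr, Equiv.trans_apply]
      rw [show (Equiv.sumCompl fun j => x' j = true).symm i = Sum.inl ⟨i, h⟩ from
        Equiv.sumCompl_symm_apply_of_pos (p := fun j => x' j = true) (a := i) h]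
      simpa using (e ⟨i, h⟩).2
    simp [h, this]
  · have : ¬ x ((Equiv.subtypeCongr e f) i) = true := by
      simp only [Equiv.subtypeCongr, Equiv.trans_apply]
      rw [show (Equiv.sumCompl fun j => x' j = true).symm i = Sum.inr ⟨i, h⟩ from
        Equiv.sumCompl_symm_apply_of_neg (p := fun j => x' j = true) (a := i) h]
      simpa using (f ⟨i, h⟩).2
    simp only [Function.comp_apply]
    rw [Bool.not_eq_true] at h this
    rw [h, this]

lemma count_rep (n i : ℕ) (h : i ≤ n) : count (rep n i) = i := by
  unfold count rep
  simp only [decide_eq_true_eq]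
  conv_rhs => rw [← Finset.card_range i]
  refine Finset.card_bij (fun a _ => (a : ℕ)) ?_ ?_ ?_
  · intro a ha; simp at ha ⊢; exact ha
  · intro a _ b _ hab; exact Fin.val_injective hab
  · intro b hb; simp at hb; exact ⟨⟨b, hb.trans_le h⟩, by simp [hb], rfl⟩

lemma count_le {n : ℕ} (x : Fin n → Bool) : count x ≤ n := by
  unfold count
  calc (Finset.univ.filter fun i => x i = true).card
      ≤ Finset.univ.card := Finset.card_filter_le _ _
    _ = n := by simp

/-- Counting randomized response depends only on the count of the input: inputs
with equal counts induce equal output distributions, and in particular any input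
with count `i` induces the same distribution as the representative `rep n i`. -/
theorem RRcount_symmetry (n : ℕ) (lam : ℝ) (h0 : 0 ≤ lam) (h1 : lam ≤ 1) :
    (∀ x x' : Fin n → Bool, count x = count x' →
      ∀ k : ℕ, RRcount n lam h1 x k = RRcount n lam h1 x' k) ∧
    (∀ (x : Fin n → Bool) (i : ℕ), count x = i →
      RRcount n lam h1 x = RRcount n lam h1 (rep n i)) := by
  constructor
  · intro x x' hc k
    obtain ⟨σ, hσ⟩ := exists_perm x x' hc
    rw [hσ, RRcount_perm]
  · intro x i hci
    have hin : i ≤ n := hci ▸ count_le x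
    obtain ⟨σ, hσ⟩ := exists_perm x (rep n i) (hci.trans (count_rep n i hin).symm)
    rw [hσ, RRcount_perm]
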